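/- If ϖ_ε is the flattened algebraic vortex and c(r) = -(1/r^2)·∫₀^r s·ϖ_ε(s) ds, then c'(r) = -(1/r^3)·∫₀^r ϖ_ε'(s)·s^2 ds > 0 for all r > 0; i.e. c is strictly increasing on (0,∞). -/

import Mathlib

open MeasureTheory

noncomputable def ϖ₀ (r : ℝ) : ℝ := (1 + r ^ 2)⁻¹

noncomputable def ϖε (ε r : ℝ) : ℝ :=
  if r ≤ 1 - ε / 2 then ϖ₀ r + ϖ₀ (1 + ε / 2) - ϖ₀ (1 - ε / 2)
  else if r < 1 + ε / 2 then ϖ₀ (1 + ε / 2)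
  else ϖ₀ r

/-- The (weak) derivative of the flattened profile. -/
noncomputable def ϖε' (ε s : ℝ) : ℝ :=
  if s ≤ 1 - ε / 2 ∨ 1 + ε / 2 ≤ s then deriv ϖ₀ s else 0

lemma hasDerivAt_ϖ₀ (s : ℝ) : HasDerivAt ϖ₀ (-(2 * s) / (1 + s ^ 2) ^ 2) s := by
  have h : (1 : ℝ) + s ^ 2 ≠ 0 := by positivity
  have := (((hasDerivAt_pow 2 s).const_add 1).fun_inv h)
  refine this.congr_deriv ?_
  push_cast
  ring

lemma deriv_ϖ₀_eq (s : ℝ) : deriv ϖ₀ s = -(2 * s) / (1 + s ^ 2) ^ 2 :=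
  (hasDerivAt_ϖ₀ s).deriv

lemma cont_ϖ₀ : Continuous ϖ₀ := by
  have h : ∀ s : ℝ, (1 : ℝ) + s ^ 2 ≠ 0 := fun s => by positivity
  exact Continuous.inv₀ (by continuity) h

lemma cont_ϖε {ε : ℝ} (hε : 0 < ε) : Continuous (ϖε ε) := by
  set a := 1 - ε / 2 with ha
  set b := 1 + ε / 2 with hb
  have hab : a < b := by simp [ha, hb]; linarith
  have heq : ϖε ε = fun r =>
      if r ≤ a then ϖ₀ r + ϖ₀ b - ϖ₀ a else if r ≤ b then ϖ₀ b else ϖ₀ r := by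
    funext r
    by_cases h1 : r ≤ a
    · simp [ϖε, ← ha, ← hb, h1]
    · by_cases h2 : r < b
      · simp [ϖε, ← ha, ← hb, h1, h2, h2.le]
      · push_neg at h2
        rcases eq_or_lt_of_le h2 with h3 | h3
        · simp [ϖε, ← ha, ← hb, h1, not_lt.2 h2, ← h3]
        · simp [ϖε, ← ha, ← hb, h1, not_lt.2 h2, not_le.2 h3]
  rw [heq]
  apply Continuous.if_le
  · exact (cont_ϖ₀.add continuous_const).sub continuous_const
  · apply Continuous.if_le continuous_const cont_ϖ₀ continuous_id continuous_const
    intro x hx; simp only [id_eq] at hx; rw [hx]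
  · exact continuous_id
  · exact continuous_const
  · intro x hx
    simp only [hx, hab.le, if_pos]
    ring

lemma cont_g₀ : Continuous (fun s : ℝ => deriv ϖ₀ s * s ^ 2) := by
  have : (fun s : ℝ => deriv ϖ₀ s * s ^ 2)
      = fun s => -(2 * s) / (1 + s ^ 2) ^ 2 * s ^ 2 := by
    funext s; rw [deriv_ϖ₀_eq]
  rw [this]
  exact ((continuous_const.mul continuous_id).neg.div (by continuity)
    (fun s => by positivity)).mul (by continuity)

lemma gprime_eq_indicator (ε : ℝ) : (fun s => ϖε' ε s * s ^ 2)
    = (Set.Iic (1 - ε / 2) ∪ Set.Ici (1 + ε / 2)).indicator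
        (fun s => deriv ϖ₀ s * s ^ 2) := by
  funext s
  by_cases h : s ≤ 1 - ε / 2 ∨ 1 + ε / 2 ≤ s
  · rw [Set.indicator_of_mem (by simpa using h)]
    simp [ϖε', h]
  · rw [Set.indicator_of_notMem (by simpa using h)]
    simp [ϖε', h]

lemma gprime_intble (ε p q : ℝ) :
    IntervalIntegrable (fun s => ϖε' ε s * s ^ 2) volume p q := by
  rw [gprime_eq_indicator]
  have hA : MeasurableSet (Set.Iic (1 - ε / 2) ∪ Set.Ici (1 + ε / 2)) :=
    measurableSet_Iic.union measurableSet_Ici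
  constructor <;>
  · exact (cont_g₀.integrableOn_Ioc).indicator hA

theorem angular_velocity_strictly_increasing (ε : ℝ) (hε : ε ∈ Set.Ioo (0:ℝ) 1)
    (r : ℝ) (hr : 0 < r) :
    HasDerivAt (fun x : ℝ => -(1 / x ^ 2) * ∫ s in (0:ℝ)..x, s * ϖε ε s)
      (-(1 / r ^ 3) * ∫ s in (0:ℝ)..r, ϖε' ε s * s ^ 2) r ∧
    0 < -(1 / r ^ 3) * ∫ s in (0:ℝ)..r, ϖε' ε s * s ^ 2 := by
  obtain ⟨hε0, hε1⟩ := hε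
  set a := 1 - ε / 2 with ha
  set b := 1 + ε / 2 with hb
  have ha0 : 0 < a := by simp only [ha]; linarith
  have hab : a < b := by simp only [ha, hb]; linarith
  have hcw : Continuous (ϖε ε) := cont_ϖε hε0
  -- the function H s = s^2 * ϖε ε s and its "derivative" g
  set H : ℝ → ℝ := fun s => s ^ 2 * ϖε ε s with hH
  set g : ℝ → ℝ := fun s => ϖε' ε s * s ^ 2 + 2 * s * ϖε ε s with hg
  have hcg2 : Continuous (fun s : ℝ => 2 * s * ϖε ε s) :=
    (continuous_const.mul continuous_id).mul hcw
  have hgint : ∀ p q : ℝ, IntervalIntegrable g volume p q := fun p q =>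
    (gprime_intble ε p q).add (hcg2.intervalIntegrable p q)
  have hcH : Continuous H := (continuous_pow 2).mul hcw
  -- pointwise derivative of H off the junctions
  have hder : ∀ s : ℝ, s < a ∨ (a < s ∧ s < b) ∨ b < s → HasDerivAt H (g s) s := by
    intro s hs
    rcases hs with hs | ⟨hs1, hs2⟩ | hs
    · -- s < a : ϖε = ϖ₀ + C near s
      have hev : (fun x => x ^ 2 * (ϖ₀ x + (ϖ₀ b - ϖ₀ a))) =ᶠ[nhds s] H := by
        filter_upwards [Iio_mem_nhds hs] with x hx
        have hx' : x < a := hx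
        simp only [H, ϖε, ← ha, ← hb, if_pos hx'.le]
        ring
      have hd : HasDerivAt (fun x => x ^ 2 * (ϖ₀ x + (ϖ₀ b - ϖ₀ a)))
          (2 * s ^ 1 * (ϖ₀ s + (ϖ₀ b - ϖ₀ a)) +
            s ^ 2 * (-(2 * s) / (1 + s ^ 2) ^ 2)) s := by
        have := (hasDerivAt_pow 2 s).fun_mul ((hasDerivAt_ϖ₀ s).add_const (ϖ₀ b - ϖ₀ a))
        refine this.congr_deriv ?_
        all_goals push_cast; ring
      have := hd.congr_of_eventuallyEq hev.symm
      refine this.congr_deriv ?_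
      have h1 : ϖε' ε s = -(2 * s) / (1 + s ^ 2) ^ 2 := by
        rw [ϖε', if_pos (Or.inl hs.le), deriv_ϖ₀_eq]
      have h2 : ϖε ε s = ϖ₀ s + (ϖ₀ b - ϖ₀ a) := by
        simp only [ϖε, ← ha, ← hb, if_pos hs.le]; ring
      simp only [g, h1, h2]; ring
    · -- plateau
      have hev : (fun x => x ^ 2 * ϖ₀ b) =ᶠ[nhds s] H := by
        filter_upwards [Ioo_mem_nhds hs1 hs2] with x hx
        simp only [H, ϖε, ← ha, ← hb, if_neg (not_le.2 hx.1), if_pos hx.2]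
      have hd : HasDerivAt (fun x => x ^ 2 * ϖ₀ b) (2 * s ^ 1 * ϖ₀ b) s := by
        simpa using (hasDerivAt_pow 2 s).mul_const (ϖ₀ b)
      have := hd.congr_of_eventuallyEq hev.symm
      refine this.congr_deriv ?_
      have h1 : ϖε' ε s = 0 := by
        rw [ϖε', if_neg]; push_neg; exact ⟨hs1, hs2⟩
      have h2 : ϖε ε s = ϖ₀ b := by
        simp only [ϖε, ← ha, ← hb, if_neg (not_le.2 hs1), if_pos hs2]
      simp only [g, h1, h2]; ring
    · -- s > b
      have hev : (fun x => x ^ 2 * ϖ₀ x) =ᶠ[nhds s] H := by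
        filter_upwards [Ioi_mem_nhds hs] with x hx
        have hx' : b < x := hx
        simp only [H, ϖε, ← ha, ← hb, if_neg (not_le.2 (hab.trans hx')), if_neg (not_lt.2 hx'.le)]
      have hd : HasDerivAt (fun x => x ^ 2 * ϖ₀ x)
          (2 * s ^ 1 * ϖ₀ s + s ^ 2 * (-(2 * s) / (1 + s ^ 2) ^ 2)) s := by
        have := (hasDerivAt_pow 2 s).fun_mul (hasDerivAt_ϖ₀ s)
        refine this.congr_deriv ?_
        all_goals push_cast; ring
      have := hd.congr_of_eventuallyEq hev.symm
      refine this.congr_deriv ?_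
      have h1 : ϖε' ε s = -(2 * s) / (1 + s ^ 2) ^ 2 := by
        rw [ϖε', if_pos (Or.inr hs.le), deriv_ϖ₀_eq]
      have h2 : ϖε ε s = ϖ₀ s := by
        simp only [ϖε, ← ha, ← hb, if_neg (not_le.2 (hab.trans hs)), if_neg (not_lt.2 hs.le)]
      simp only [g, h1, h2]; ring
  -- FTC on a piece
  have ftc : ∀ p q : ℝ, p ≤ q → (∀ s ∈ Set.Ioo p q, HasDerivAt H (g s) s) →
      ∫ s in p..q, g s = H q - H p := by
    intro p q hpq hd
    exact intervalIntegral.integral_eq_sub_of_hasDeriv_right_of_le hpq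
      (hcH.continuousOn) (fun x hx => (hd x hx).hasDerivWithinAt) (hgint p q)
  -- the integration by parts identity
  set m1 := min r a with hm1
  set m2 := min r b with hm2
  have h0m1 : 0 ≤ m1 := le_min hr.le ha0.le
  have hm1m2 : m1 ≤ m2 := min_le_min le_rfl hab.le
  have hm2r : m2 ≤ r := min_le_left r b
  have e1 : ∫ s in (0:ℝ)..m1, g s = H m1 - H 0 := by
    apply ftc 0 m1 h0m1
    intro s hs
    exact hder s (Or.inl (lt_of_lt_of_le hs.2 (min_le_right r a)))
  have e2 : ∫ s in m1..m2, g s = H m2 - H m1 := by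
    apply ftc m1 m2 hm1m2
    intro s hs
    have hra : a < r := by
      by_contra hra
      push_neg at hra
      have h1 : m1 = r := min_eq_left hra
      have h2 : m2 = r := min_eq_left (hra.trans hab.le)
      rw [h1, h2] at hs
      exact absurd hs.1 (not_lt.2 hs.2.le)
    have hm1a : m1 = a := min_eq_right hra.le
    refine hder s (Or.inr (Or.inl ⟨hm1a ▸ hs.1, lt_of_lt_of_le hs.2 (min_le_right r b)⟩))
  have e3 : ∫ s in m2..r, g s = H r - H m2 := by
    apply ftc m2 r hm2r
    intro s hs
    have hbr : b < r := by
      by_contra hbr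
      push_neg at hbr
      have : m2 = r := min_eq_left hbr
      rw [this] at hs
      exact absurd hs.1 (not_lt.2 hs.2.le)
    have : m2 = b := min_eq_right hbr.le
    exact hder s (Or.inr (Or.inr (this ▸ hs.1)))
  have hsplit : ∫ s in (0:ℝ)..r, g s = H r - H 0 := by
    rw [← intervalIntegral.integral_add_adjacent_intervals (hgint 0 m2) (hgint m2 r),
        ← intervalIntegral.integral_add_adjacent_intervals (hgint 0 m1) (hgint m1 m2),
        e1, e2, e3]
    ring
  have hH0 : H 0 = 0 := by simp [H]
  -- split g-integral into the two pieces
  have hibp : ∫ s in (0:ℝ)..r, ϖε' ε s * s ^ 2 = r ^ 2 * ϖε ε r - 2 * ∫ s in (0:ℝ)..r, s * ϖε ε s := by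
    have hsum : (∫ s in (0:ℝ)..r, ϖε' ε s * s ^ 2) + ∫ s in (0:ℝ)..r, 2 * s * ϖε ε s
        = r ^ 2 * ϖε ε r := by
      rw [← intervalIntegral.integral_add (gprime_intble ε 0 r) (hcg2.intervalIntegrable 0 r)]
      rw [hsplit] at *
      · simp [hH0, H]
    have h2 : ∫ s in (0:ℝ)..r, 2 * s * ϖε ε s = 2 * ∫ s in (0:ℝ)..r, s * ϖε ε s := by
      rw [← intervalIntegral.integral_const_mul]
      congr 1; funext s; ring
    rw [h2] at hsum
    linarith
  -- the derivative computation
  have hF : HasDerivAt (fun x : ℝ => ∫ s in (0:ℝ)..x, s * ϖε ε s) (r * ϖε ε r) r := by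
    have hc : Continuous (fun s : ℝ => s * ϖε ε s) := continuous_id.mul hcw
    exact intervalIntegral.integral_hasDerivAt_right (hc.intervalIntegrable 0 r)
      (hc.stronglyMeasurableAtFilter volume (nhds r)) hc.continuousAt
  have hG : HasDerivAt (fun x : ℝ => -(1 / x ^ 2)) (2 * r / (r ^ 2) ^ 2) r := by
    have h1 : HasDerivAt (fun x : ℝ => x ^ 2) (2 * r) r := by
      simpa using hasDerivAt_pow 2 r
    have h2 := (h1.fun_inv (by positivity)).fun_neg
    have : (fun x : ℝ => -(1 / x ^ 2)) = fun x : ℝ => -(x ^ 2)⁻¹ := by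
      funext x; rw [one_div]
    rw [this]
    refine h2.congr_deriv ?_
    field_simp
  have hprod := hG.fun_mul hF
  have hDeriv : HasDerivAt (fun x : ℝ => -(1 / x ^ 2) * ∫ s in (0:ℝ)..x, s * ϖε ε s)
      (-(1 / r ^ 3) * ∫ s in (0:ℝ)..r, ϖε' ε s * s ^ 2) r := by
    refine hprod.congr_deriv ?_
    rw [hibp]
    have hr0 : r ≠ 0 := hr.ne'
    field_simp
    ring
  refine ⟨hDeriv, ?_⟩
  -- positivity
  have hInt_neg : (∫ s in (0:ℝ)..r, ϖε' ε s * s ^ 2) < 0 := by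
    set m := min r a with hm
    have hm0 : 0 < m := lt_min hr ha0
    have hmr : m ≤ r := min_le_left r a
    have split : (∫ s in (0:ℝ)..r, ϖε' ε s * s ^ 2)
        = (∫ s in (0:ℝ)..m, ϖε' ε s * s ^ 2) + ∫ s in m..r, ϖε' ε s * s ^ 2 :=
      (intervalIntegral.integral_add_adjacent_intervals (gprime_intble ε 0 m)
        (gprime_intble ε m r)).symm
    have hpiece1 : (∫ s in (0:ℝ)..m, ϖε' ε s * s ^ 2) < 0 := by
      have hpos : 0 < ∫ s in (0:ℝ)..m, -(ϖε' ε s * s ^ 2) := by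
        apply intervalIntegral.intervalIntegral_pos_of_pos_on
          ((gprime_intble ε 0 m).neg)
        · intro x hx
          show 0 < -(ϖε' ε x * x ^ 2)
          have hxa : x ≤ a := le_of_lt (lt_of_lt_of_le hx.2 (min_le_right r a))
          have : ϖε' ε x = -(2 * x) / (1 + x ^ 2) ^ 2 := by
            rw [ϖε', if_pos (Or.inl hxa), deriv_ϖ₀_eq]
          rw [this]
          have hx0 := hx.1
          have h1 : -(2 * x) / (1 + x ^ 2) ^ 2 < 0 := by
            apply div_neg_of_neg_of_pos (by linarith) (by positivity)
          nlinarith [sq_nonneg x, mul_pos (neg_pos.2 h1) (pow_pos hx0 2)]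
        · exact hm0
      rw [intervalIntegral.integral_neg] at hpos
      linarith
    have hpiece2 : (∫ s in m..r, ϖε' ε s * s ^ 2) ≤ 0 := by
      have : 0 ≤ ∫ s in m..r, -(ϖε' ε s * s ^ 2) := by
        apply intervalIntegral.integral_nonneg hmr
        intro u hu
        show 0 ≤ -(ϖε' ε u * u ^ 2)
        have hu0 : 0 ≤ u := hm0.le.trans hu.1
        have : ϖε' ε u ≤ 0 := by
          rw [ϖε']
          split
          · rw [deriv_ϖ₀_eq]
            apply div_nonpos_of_nonpos_of_nonneg (by linarith) (by positivity)
          · exact le_rfl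
        nlinarith [sq_nonneg u]
      rw [intervalIntegral.integral_neg] at this
      linarith
    rw [split]; linarith
  have : -(1 / r ^ 3) < 0 := by
    simp only [neg_neg, neg_lt, neg_zero]
    positivity
  exact mul_pos_of_neg_of_neg this hInt_neg
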